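/- arXiv:2106.01488 — 4 statements merged into one kernel-verified Lean document; each statement's English description precedes it below -/
import Mathlib

section
/- For T-step stochastic gradient ascent y_{t+1} = y_t + η∇_y f_{σ(t)}(x, y_t) with initialization y_0 independent of x, if every f_j is L-gradient Lipschitz, then the map x ↦ y_T(x) is (1+ηL)^T-Lipschitz. -/
/-!
One gradient step `y ↦ y + η ∇_y f(x, y)` moves the gap `‖y₁ - y₂‖ + ‖x₁ - x₂‖` by a factor at
most `1 + ηL`, since the gradients differ by at most `L (‖x₁ - x₂‖ + ‖y₁ - y₂‖)`. After `T` steps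
from a common starting point the gap is at most `(1 + ηL)^T ‖x₁ - x₂‖`.
-/

theorem norm_add_smul_sub_add_smul_add_le {F : Type*} [SeminormedAddCommGroup F]
    [NormedSpace ℝ F] {η L r : ℝ} (hη : 0 ≤ η) {y₁ y₂ v₁ v₂ : F}
    (hv : ‖v₁ - v₂‖ ≤ L * (r + ‖y₁ - y₂‖)) :
    ‖(y₁ + η • v₁) - (y₂ + η • v₂)‖ + r ≤ (1 + η * L) * (‖y₁ - y₂‖ + r) := by
  have hsplit : (y₁ + η • v₁) - (y₂ + η • v₂) = (y₁ - y₂) + η • (v₁ - v₂) := by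
    rw [smul_sub]; abel
  calc ‖(y₁ + η • v₁) - (y₂ + η • v₂)‖ + r
      ≤ ‖y₁ - y₂‖ + η * ‖v₁ - v₂‖ + r := by
        rw [hsplit]
        grw [norm_add_le, norm_smul, Real.norm_of_nonneg hη]
    _ ≤ ‖y₁ - y₂‖ + η * (L * (r + ‖y₁ - y₂‖)) + r := by gcongr
    _ = (1 + η * L) * (‖y₁ - y₂‖ + r) := by ring

theorem sga_lipschitz_general {d1 d2 n : ℕ} (L η : ℝ) (hL : 0 ≤ L) (hη : 0 ≤ η) (T : ℕ)
    (f : Fin n → EuclideanSpace ℝ (Fin d1) → EuclideanSpace ℝ (Fin d2) → ℝ)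
    (σ : ℕ → Fin n) (y0 : EuclideanSpace ℝ (Fin d2))
    (y : EuclideanSpace ℝ (Fin d1) → ℕ → EuclideanSpace ℝ (Fin d2))
    (hgrad : ∀ j x1 y1 x2 y2,
      ‖gradient (f j x1) y1 - gradient (f j x2) y2‖ ≤ L * (‖x1 - x2‖ + ‖y1 - y2‖))
    (hy0 : ∀ x, y x 0 = y0)
    (hrec : ∀ x t, y x (t + 1) = y x t + η • gradient (f (σ t) x) (y x t)) :
    ∀ x1 x2, ‖y x1 T - y x2 T‖ ≤ (1 + η * L) ^ T * ‖x1 - x2‖ := by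
  intro x1 x2
  set gap : ℕ → ℝ := fun t ↦ ‖y x1 t - y x2 t‖ + ‖x1 - x2‖
  have hstep : ∀ t, gap (t + 1) ≤ (1 + η * L) * gap t := fun t ↦ by
    simp only [gap, hrec]
    exact norm_add_smul_sub_add_smul_add_le hη (hgrad (σ t) x1 (y x1 t) x2 (y x2 t))
  have hgeom : gap T ≤ (1 + η * L) ^ T * gap 0 :=
    le_geom (by positivity) T fun t _ ↦ hstep t
  simp only [gap, hy0, sub_self, norm_zero, zero_add] at hgeom
  linarith [norm_nonneg (x1 - x2)]

/-- `T`-step stochastic gradient ascent with `L`-gradient Lipschitz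
component functions and initialization independent of `x` is
`(1+ηL)^T`-Lipschitz as a map `x ↦ y_T(x)`. -/
theorem sga_lipschitz {d1 d2 n : ℕ} (L η : ℝ) (hL : 0 ≤ L) (hη : 0 ≤ η) (T : ℕ)
    (f : Fin n → EuclideanSpace ℝ (Fin d1) → EuclideanSpace ℝ (Fin d2) → ℝ)
    (σ : ℕ → Fin n) (y0 : EuclideanSpace ℝ (Fin d2))
    (y : EuclideanSpace ℝ (Fin d1) → ℕ → EuclideanSpace ℝ (Fin d2))
    (hdiff : ∀ j x, Differentiable ℝ (f j x))
    (hgrad : ∀ j x1 y1 x2 y2,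
      ‖gradient (f j x1) y1 - gradient (f j x2) y2‖ ≤ L * (‖x1 - x2‖ + ‖y1 - y2‖))
    (hy0 : ∀ x, y x 0 = y0)
    (hrec : ∀ x t, y x (t + 1) = y x t + η • gradient (f (σ t) x) (y x t)) :
    ∀ x1 x2, ‖y x1 T - y x2 T‖ ≤ (1 + η * L) ^ T * ‖x1 - x2‖ :=
  sga_lipschitz_general L η hL hη T f σ y0 y hgrad hy0 hrec
end

section
/- For T-step stochastic gradient ascent y_{t+1} = y_t + η∇_y f_{σ(t)}(x, y_t) with Dy_0 = 0, if each f_j is L-gradient Lipschitz and ρ-Hessian Lipschitz, then the Jacobian x ↦ Dy_T(x) is Lipschitz with constant 4(ρ/L)(1+ηL)^{2T}. -/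
/-!
With `g_t(x, y) = ∇_y f_{σ(t)}(x, y)`, differentiating `y_{t+1}(x) = y_t(x) + η g_t(x, y_t(x))`
gives the Jacobian recursion `J_{t+1} = J_t + η Dg_t(x, y_t) ∘ (id, J_t)`, where
`Dg_t ∘ (id, J) = ∇²_{yx} f + ∇²_{yy} f · J`. So `‖J_t‖ ≤ (1+ηL)^t - 1` and, by the mean value
theorem, `y_t` is `((1+ηL)^t - 1)`-Lipschitz. Hence `Dg_t` along the two trajectories differs by
at most `ρ (1+ηL)^t ‖x₁ - x₂‖`, and splitting the difference of the compositions gives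
`‖J_{t+1}(x₁) - J_{t+1}(x₂)‖ ≤ (1+ηL) ‖J_t(x₁) - J_t(x₂)‖ + ηρ (1+ηL)^{2t} ‖x₁ - x₂‖`.
As `1 + 2ηL ≤ (1+ηL)^2`, this keeps `‖J_t(x₁) - J_t(x₂)‖ ≤ (ρ/L) (1+ηL)^{2t} ‖x₁ - x₂‖`.
-/

namespace ContinuousLinearMap

variable {E F G : Type*} [NormedAddCommGroup E] [NormedSpace ℝ E] [NormedAddCommGroup F]
  [NormedSpace ℝ F] [NormedAddCommGroup G] [NormedSpace ℝ G]

theorem norm_id_prod_le (u : E →L[ℝ] F) :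
    ‖(ContinuousLinearMap.id ℝ E).prod u‖ ≤ max 1 ‖u‖ := by
  rw [opNorm_prod, Prod.norm_def]
  exact max_le_max_right _ norm_id_le

theorem norm_comp_id_prod_sub_le (A B : E × F →L[ℝ] G) (u v : E →L[ℝ] F) :
    ‖A.comp ((ContinuousLinearMap.id ℝ E).prod u) -
        B.comp ((ContinuousLinearMap.id ℝ E).prod v)‖
      ≤ ‖A - B‖ * max 1 ‖u‖ + ‖B‖ * ‖u - v‖ := by
  have hsplit : A.comp ((ContinuousLinearMap.id ℝ E).prod u) -
        B.comp ((ContinuousLinearMap.id ℝ E).prod v)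
      = (A - B).comp ((ContinuousLinearMap.id ℝ E).prod u) +
        B.comp ((0 : E →L[ℝ] E).prod (u - v)) := by
    ext x
    have hB : B (0, u x - v x) = B (x, u x) - B (x, v x) := by
      rw [← map_sub, Prod.mk_sub_mk, sub_self]
    simp [hB]
  have hprod : ‖(0 : E →L[ℝ] E).prod (u - v)‖ = ‖u - v‖ := by
    rw [opNorm_prod, Prod.norm_def, norm_zero, max_eq_right (norm_nonneg _)]
  rw [hsplit]
  refine (norm_add_le _ _).trans (add_le_add ?_ ?_)
  · exact (opNorm_comp_le _ _).trans (by gcongr; exact norm_id_prod_le u)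
  · exact (opNorm_comp_le _ _).trans_eq (by rw [hprod])

end ContinuousLinearMap

section GradientAscent

variable {E1 E2 : Type*} [NormedAddCommGroup E1] [NormedSpace ℝ E1]
  [NormedAddCommGroup E2] [NormedSpace ℝ E2]
  {η L ρ : ℝ} {g : ℕ → E1 × E2 → E2} {y : E1 → ℕ → E2}

noncomputable def sgaJacobian (η : ℝ) (g : ℕ → E1 × E2 → E2) (y : E1 → ℕ → E2) (x : E1) :
    ℕ → (E1 →L[ℝ] E2)
  | 0 => 0
  | t + 1 => sgaJacobian η g y x t +
      η • (fderiv ℝ (g t) (x, y x t)).comp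
        ((ContinuousLinearMap.id ℝ E1).prod (sgaJacobian η g y x t))

theorem hasFDerivAt_sgaIterate (hg : ∀ t, Differentiable ℝ (g t)) {y0 : E2}
    (hy0 : ∀ x, y x 0 = y0) (hrec : ∀ x t, y x (t + 1) = y x t + η • g t (x, y x t))
    (t : ℕ) (x : E1) :
    HasFDerivAt (fun x => y x t) (sgaJacobian η g y x t) x := by
  induction t generalizing x with
  | zero =>
    simp only [hy0]
    exact hasFDerivAt_const y0 x
  | succ t ih =>
    simp only [hrec]
    exact (ih x).add
      (((hg t _).hasFDerivAt.comp x ((hasFDerivAt_id x).prodMk (ih x))).const_smul η)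

theorem norm_sgaJacobian_le (hη : 0 ≤ η) (hL : 0 ≤ L) (hgL : ∀ t w, ‖fderiv ℝ (g t) w‖ ≤ L)
    (x : E1) (t : ℕ) : ‖sgaJacobian η g y x t‖ ≤ (1 + η * L) ^ t - 1 := by
  induction t with
  | zero => simp [sgaJacobian]
  | succ t ih =>
    have hmax : max 1 ‖sgaJacobian η g y x t‖ ≤ (1 + η * L) ^ t :=
      max_le (one_le_pow₀ (le_add_of_nonneg_right (mul_nonneg hη hL))) (by linarith)
    have hstep : ‖(fderiv ℝ (g t) (x, y x t)).comp
        ((ContinuousLinearMap.id ℝ E1).prod (sgaJacobian η g y x t))‖ ≤ L * (1 + η * L) ^ t :=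
      (ContinuousLinearMap.opNorm_comp_le _ _).trans <| mul_le_mul (hgL t _)
        ((ContinuousLinearMap.norm_id_prod_le _).trans hmax) (norm_nonneg _) hL
    calc ‖sgaJacobian η g y x (t + 1)‖
        ≤ ‖sgaJacobian η g y x t‖ + η * (L * (1 + η * L) ^ t) := by
          refine (norm_add_le _ _).trans (add_le_add_right ?_ _)
          rw [norm_smul, Real.norm_of_nonneg hη]
          exact mul_le_mul_of_nonneg_left hstep hη
      _ ≤ (1 + η * L) ^ (t + 1) - 1 := by rw [pow_succ]; linarith

theorem norm_sgaIterate_sub_le (hη : 0 ≤ η) (hL : 0 ≤ L) (hg : ∀ t, Differentiable ℝ (g t))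
    (hgL : ∀ t w, ‖fderiv ℝ (g t) w‖ ≤ L) {y0 : E2} (hy0 : ∀ x, y x 0 = y0)
    (hrec : ∀ x t, y x (t + 1) = y x t + η • g t (x, y x t)) (t : ℕ) (x₁ x₂ : E1) :
    ‖y x₁ t - y x₂ t‖ ≤ ((1 + η * L) ^ t - 1) * ‖x₁ - x₂‖ :=
  convex_univ.norm_image_sub_le_of_norm_hasFDerivWithin_le
    (fun x _ => (hasFDerivAt_sgaIterate hg hy0 hrec t x).hasFDerivWithinAt)
    (fun x _ => norm_sgaJacobian_le hη hL hgL x t) trivial trivial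

theorem norm_sgaJacobian_succ_sub_le (hη : 0 ≤ η) (hL : 0 ≤ L) (hρ : 0 ≤ ρ)
    (hg : ∀ t, Differentiable ℝ (g t)) (hgL : ∀ t w, ‖fderiv ℝ (g t) w‖ ≤ L)
    (hgρ : ∀ t (w₁ w₂ : E1 × E2),
      ‖fderiv ℝ (g t) w₁ - fderiv ℝ (g t) w₂‖ ≤ ρ * (‖w₁.1 - w₂.1‖ + ‖w₁.2 - w₂.2‖))
    {y0 : E2} (hy0 : ∀ x, y x 0 = y0)
    (hrec : ∀ x t, y x (t + 1) = y x t + η • g t (x, y x t))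
    (t : ℕ) (x₁ x₂ : E1) :
    ‖sgaJacobian η g y x₁ (t + 1) - sgaJacobian η g y x₂ (t + 1)‖
      ≤ (1 + η * L) * ‖sgaJacobian η g y x₁ t - sgaJacobian η g y x₂ t‖
        + η * ρ * (1 + η * L) ^ (2 * t) * ‖x₁ - x₂‖ := by
  set q := 1 + η * L
  set δ := ‖x₁ - x₂‖
  set J₁ := sgaJacobian η g y x₁ t
  set J₂ := sgaJacobian η g y x₂ t
  set G₁ := fderiv ℝ (g t) (x₁, y x₁ t)
  set G₂ := fderiv ℝ (g t) (x₂, y x₂ t)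
  have hHess : ‖G₁ - G₂‖ ≤ ρ * q ^ t * δ :=
    calc ‖G₁ - G₂‖ ≤ ρ * (δ + ‖y x₁ t - y x₂ t‖) := hgρ t _ _
      _ ≤ ρ * (δ + (q ^ t - 1) * δ) := by
        gcongr; exact norm_sgaIterate_sub_le hη hL hg hgL hy0 hrec t x₁ x₂
      _ = ρ * q ^ t * δ := by ring
  have hmax : max 1 ‖J₁‖ ≤ q ^ t :=
    max_le (one_le_pow₀ (le_add_of_nonneg_right (mul_nonneg hη hL)))
      (by linarith [norm_sgaJacobian_le hη hL hgL x₁ t (y := y)])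
  have hsub : sgaJacobian η g y x₁ (t + 1) - sgaJacobian η g y x₂ (t + 1)
      = J₁ - J₂ + η • (G₁.comp ((ContinuousLinearMap.id ℝ E1).prod J₁)
        - G₂.comp ((ContinuousLinearMap.id ℝ E1).prod J₂)) := by
    simp only [sgaJacobian, smul_sub]; abel
  calc ‖sgaJacobian η g y x₁ (t + 1) - sgaJacobian η g y x₂ (t + 1)‖
      ≤ ‖J₁ - J₂‖ + η * (ρ * q ^ t * δ * q ^ t + L * ‖J₁ - J₂‖) := by
        rw [hsub]
        refine (norm_add_le _ _).trans (add_le_add_right ?_ _)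
        rw [norm_smul, Real.norm_of_nonneg hη]
        refine mul_le_mul_of_nonneg_left
          ((ContinuousLinearMap.norm_comp_id_prod_sub_le G₁ G₂ J₁ J₂).trans ?_) hη
        exact add_le_add (mul_le_mul hHess hmax (by positivity) (by positivity))
          (mul_le_mul_of_nonneg_right (hgL t _) (norm_nonneg _))
    _ = q * ‖J₁ - J₂‖ + η * ρ * q ^ (2 * t) * δ := by ring

theorem norm_sgaJacobian_sub_le (hη : 0 ≤ η) (hL : 0 < L) (hρ : 0 ≤ ρ)
    (hg : ∀ t, Differentiable ℝ (g t)) (hgL : ∀ t w, ‖fderiv ℝ (g t) w‖ ≤ L)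
    (hgρ : ∀ t (w₁ w₂ : E1 × E2),
      ‖fderiv ℝ (g t) w₁ - fderiv ℝ (g t) w₂‖ ≤ ρ * (‖w₁.1 - w₂.1‖ + ‖w₁.2 - w₂.2‖))
    {y0 : E2} (hy0 : ∀ x, y x 0 = y0)
    (hrec : ∀ x t, y x (t + 1) = y x t + η • g t (x, y x t))
    (t : ℕ) (x₁ x₂ : E1) :
    ‖sgaJacobian η g y x₁ t - sgaJacobian η g y x₂ t‖
      ≤ ρ / L * (1 + η * L) ^ (2 * t) * ‖x₁ - x₂‖ := by
  induction t with
  | zero =>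
    simp only [sgaJacobian, sub_self, norm_zero, mul_zero, pow_zero, mul_one]
    positivity
  | succ t ih =>
    set q := 1 + η * L with hq
    set K := ρ / L * q ^ (2 * t) * ‖x₁ - x₂‖ with hK
    have hgrowth : q + η * L ≤ q ^ 2 := by rw [hq]; nlinarith [sq_nonneg (η * L)]
    calc _ ≤ q * ‖sgaJacobian η g y x₁ t - sgaJacobian η g y x₂ t‖
          + η * ρ * q ^ (2 * t) * ‖x₁ - x₂‖ :=
          norm_sgaJacobian_succ_sub_le hη hL.le hρ hg hgL hgρ hy0 hrec t x₁ x₂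
      _ ≤ q * K + K * (η * L) := by
          have hηρ : η * ρ * q ^ (2 * t) * ‖x₁ - x₂‖ = K * (η * L) := by
            rw [hK]; field_simp
          rw [hηρ]
          gcongr
      _ = K * (q + η * L) := by ring
      _ ≤ K * q ^ 2 := by gcongr
      _ = ρ / L * q ^ (2 * (t + 1)) * ‖x₁ - x₂‖ := by ring

end GradientAscent

theorem sga_jacobian_lipschitz_general {d1 d2 n : ℕ} (L ρ η : ℝ) (hL : 0 < L)
    (hρ : 0 ≤ ρ) (hη : 0 ≤ η) (T : ℕ)
    (f : Fin n → EuclideanSpace ℝ (Fin d1) → EuclideanSpace ℝ (Fin d2) → ℝ)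
    (σ : ℕ → Fin n) (y0 : EuclideanSpace ℝ (Fin d2))
    (y : EuclideanSpace ℝ (Fin d1) → ℕ → EuclideanSpace ℝ (Fin d2))
    (hGdiff : ∀ j, Differentiable ℝ
      (fun p : EuclideanSpace ℝ (Fin d1) × EuclideanSpace ℝ (Fin d2) =>
        gradient (f j p.1) p.2))
    (hGbound : ∀ j w, ‖fderiv ℝ
      (fun p : EuclideanSpace ℝ (Fin d1) × EuclideanSpace ℝ (Fin d2) =>
        gradient (f j p.1) p.2) w‖ ≤ L)
    (hHess : ∀ j w1 w2, ‖fderiv ℝ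
        (fun p : EuclideanSpace ℝ (Fin d1) × EuclideanSpace ℝ (Fin d2) =>
          gradient (f j p.1) p.2) w1 -
      fderiv ℝ
        (fun p : EuclideanSpace ℝ (Fin d1) × EuclideanSpace ℝ (Fin d2) =>
          gradient (f j p.1) p.2) w2‖ ≤ ρ * (‖w1.1 - w2.1‖ + ‖w1.2 - w2.2‖))
    (hy0 : ∀ x, y x 0 = y0)
    (hrec : ∀ x t, y x (t + 1) = y x t + η • gradient (f (σ t) x) (y x t)) :
    ∀ x1 x2, ‖fderiv ℝ (fun x => y x T) x1 - fderiv ℝ (fun x => y x T) x2‖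
      ≤ 4 * (ρ / L) * (1 + η * L) ^ (2 * T) * ‖x1 - x2‖ := by
  intro x1 x2
  have hderiv x := (hasFDerivAt_sgaIterate (g := fun t p => gradient (f (σ t) p.1) p.2)
    (fun t => hGdiff (σ t)) hy0 hrec T x).fderiv
  have hbound := norm_sgaJacobian_sub_le hη hL hρ (fun t => hGdiff (σ t))
    (fun t => hGbound (σ t)) (fun t => hHess (σ t)) hy0 hrec T x1 x2
  have hnonneg : 0 ≤ ρ / L * (1 + η * L) ^ (2 * T) * ‖x1 - x2‖ := by positivity
  rw [hderiv, hderiv]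
  linarith

/-- For `T`-step SGA on `L`-gradient Lipschitz and `ρ`-Hessian
Lipschitz functions, the Jacobian map `x ↦ Dy_T(x)` is
`4 (ρ/L) (1+ηL)^{2T}`-Lipschitz. -/
theorem sga_jacobian_lipschitz {d1 d2 n : ℕ} (L ρ η : ℝ) (hL : 0 < L)
    (hρ : 0 ≤ ρ) (hη : 0 ≤ η) (T : ℕ)
    (f : Fin n → EuclideanSpace ℝ (Fin d1) → EuclideanSpace ℝ (Fin d2) → ℝ)
    (σ : ℕ → Fin n) (y0 : EuclideanSpace ℝ (Fin d2))
    (y : EuclideanSpace ℝ (Fin d1) → ℕ → EuclideanSpace ℝ (Fin d2))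
    (hdiff : ∀ j x, Differentiable ℝ (f j x))
    (hGdiff : ∀ j, Differentiable ℝ
      (fun p : EuclideanSpace ℝ (Fin d1) × EuclideanSpace ℝ (Fin d2) =>
        gradient (f j p.1) p.2))
    (hGbound : ∀ j w, ‖fderiv ℝ
      (fun p : EuclideanSpace ℝ (Fin d1) × EuclideanSpace ℝ (Fin d2) =>
        gradient (f j p.1) p.2) w‖ ≤ L)
    (hHess : ∀ j w1 w2, ‖fderiv ℝ
        (fun p : EuclideanSpace ℝ (Fin d1) × EuclideanSpace ℝ (Fin d2) =>
          gradient (f j p.1) p.2) w1 -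
      fderiv ℝ
        (fun p : EuclideanSpace ℝ (Fin d1) × EuclideanSpace ℝ (Fin d2) =>
          gradient (f j p.1) p.2) w2‖ ≤ ρ * (‖w1.1 - w2.1‖ + ‖w1.2 - w2.2‖))
    (hy0 : ∀ x, y x 0 = y0)
    (hrec : ∀ x t, y x (t + 1) = y x t + η • gradient (f (σ t) x) (y x t)) :
    ∀ x1 x2, ‖fderiv ℝ (fun x => y x T) x1 - fderiv ℝ (fun x => y x T) x2‖
      ≤ 4 * (ρ / L) * (1 + η * L) ^ (2 * T) * ‖x1 - x2‖ :=
  sga_jacobian_lipschitz_general L ρ η hL hρ hη T f σ y0 y hGdiff hGbound hHess hy0 hrec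
end

section
/- Consider the nonnegative sequence δ_t with δ_0 = 0 satisfying δ_{t+1} ≤ ηL ∑_{τ=1}^t δ_τ + (1+ηL)(1-θ)δ_t + ηL for θ ∈ (0,1], η, L > 0. Then δ_t ≤ (1 + ηL/θ)^t for all t ≥ 0. -/
/-!
Put `r = 1 + ηL/θ` and argue by strong induction that `δ t ≤ r ^ t`. Feeding the bounds
`δ τ ≤ r ^ τ` into the recursion, the sum and the additive `ηL` combine into the geometric
sum `ηL ∑_{τ ≤ t} r ^ τ = θ (r ^ (t+1) - 1)`, while `1 + ηL ≤ r` (as `θ ≤ 1`) bounds the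
momentum term by `(1 - θ) r ^ (t+1)`; the two add up to `r ^ (t+1) - θ`.
-/

open Finset

theorem Finset.sum_range_succ_eq_add_sum_Icc {M : Type*} [AddCommMonoid M] (f : ℕ → M) (n : ℕ) :
    ∑ i ∈ range (n + 1), f i = f 0 + ∑ i ∈ Icc 1 n, f i := by
  rw [range_eq_Ico, sum_eq_sum_Ico_succ_bot n.add_one_pos, zero_add, Ico_add_one_right_eq_Icc]

theorem mul_geom_sum_one_add_div {K : Type*} [Field K] (a : K) {θ : K} (hθ : θ ≠ 0) (n : ℕ) :
    a * ∑ i ∈ range n, (1 + a / θ) ^ i = θ * ((1 + a / θ) ^ n - 1) := by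
  rw [← geom_sum_mul, add_sub_cancel_left]
  field_simp

theorem le_one_add_div_pow_of_le_sum_add {a θ : ℝ} (ha : 0 ≤ a) (hθ0 : 0 < θ) (hθ1 : θ ≤ 1)
    {δ : ℕ → ℝ} (hδ0 : δ 0 = 0)
    (hrec : ∀ t, δ (t + 1) ≤ a * ∑ τ ∈ Icc 1 t, δ τ + (1 + a) * (1 - θ) * δ t + a) (t : ℕ) :
    δ t ≤ (1 + a / θ) ^ t := by
  set r := 1 + a / θ
  induction t using Nat.strong_induction_on with
  | _ t ih =>
  cases t with
  | zero => simp [hδ0]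
  | succ n =>
    have hsum : a * ∑ τ ∈ Icc 1 n, δ τ + a ≤ θ * (r ^ (n + 1) - 1) :=
      calc a * ∑ τ ∈ Icc 1 n, δ τ + a ≤ a * ∑ τ ∈ Icc 1 n, r ^ τ + a := by
            gcongr with τ hτ
            exact ih τ (Nat.lt_succ_of_le (mem_Icc.1 hτ).2)
        _ = a * ∑ τ ∈ range (n + 1), r ^ τ := by
            rw [sum_range_succ_eq_add_sum_Icc, pow_zero]
            ring
        _ = θ * (r ^ (n + 1) - 1) := mul_geom_sum_one_add_div a hθ0.ne' (n + 1)
    have hmomentum : (1 + a) * (1 - θ) * δ n ≤ (1 - θ) * r ^ (n + 1) := by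
      have hθ : 0 ≤ 1 - θ := sub_nonneg.2 hθ1
      have hr : 1 + a ≤ r := add_le_add_right (le_div_self ha hθ0 hθ1) 1
      calc (1 + a) * (1 - θ) * δ n ≤ (1 + a) * (1 - θ) * r ^ n := by
            gcongr
            exact ih n n.lt_succ_self
        _ ≤ r * (1 - θ) * r ^ n := by gcongr
        _ = (1 - θ) * r ^ (n + 1) := by ring
    linarith [hrec n]

theorem snag_increment_recursion_general (η L θ : ℝ) (hη : 0 < η) (hL : 0 < L)
    (hθ0 : 0 < θ) (hθ1 : θ ≤ 1) (δ : ℕ → ℝ) (hδ0 : δ 0 = 0)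
    (hrec : ∀ t, δ (t + 1) ≤ η * L * (∑ τ ∈ Finset.Icc 1 t, δ τ) +
      (1 + η * L) * (1 - θ) * δ t + η * L) :
    ∀ t, δ t ≤ (1 + η * L / θ) ^ t :=
  le_one_add_div_pow_of_le_sum_add (mul_pos hη hL).le hθ0 hθ1 hδ0 hrec

/-- The nonnegative sequence `δ` with `δ 0 = 0` satisfying the
SNAG increment recursion is bounded by `(1 + ηL/θ)^t`. -/
theorem snag_increment_recursion (η L θ : ℝ) (hη : 0 < η) (hL : 0 < L)
    (hθ0 : 0 < θ) (hθ1 : θ ≤ 1) (δ : ℕ → ℝ) (hδ0 : δ 0 = 0)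
    (hnn : ∀ t, 0 ≤ δ t)
    (hrec : ∀ t, δ (t + 1) ≤ η * L * (∑ τ ∈ Finset.Icc 1 t, δ τ) +
      (1 + η * L) * (1 - θ) * δ t + η * L) :
    ∀ t, δ t ≤ (1 + η * L / θ) ^ t :=
  snag_increment_recursion_general η L θ hη hL hθ0 hθ1 δ hδ0 hrec
end

section
/- For T-step stochastic Nesterov accelerated gradient ascent with momentum parameter θ ∈ (0,1] on L-gradient Lipschitz functions, the map x ↦ y_T(x) is T(1+ηL/θ)^T-Lipschitz. -/
/-!
Compare two runs of the method, started at the same point, for parameters `x₁` and `x₂`, and put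
`Δ = ‖x₁ - x₂‖`. Let `a t` be the distance between the iterates and `c t` the distance between
their increments `y t - y (t - 1)`. The Lipschitz bound on the update field gives the coupled
recursion `c (t+1) ≤ (1 - θ)(1 + ηL) c t + ηL (Δ + a t)` and `a (t+1) ≤ a t + c (t+1)`. With
`ρ = 1 + ηL/θ`, i.e. `θ (ρ - 1) = ηL`, the increments satisfy `c t ≤ ρ^t Δ`: the term `ηL a t` is
controlled by the geometric sum `ηL ∑_{s ≤ t} ρ^s Δ = θ ρ (ρ^t - 1) Δ`. Summing the `t` increments
then gives `a t ≤ t ρ^t Δ`.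
-/

section Recursion

variable {K θ ρ Δ : ℝ} {a c : ℕ → ℝ}

theorem le_pow_mul_of_momentum_recursion (hK : 0 ≤ K) (hθ0 : 0 < θ) (hθ1 : θ ≤ 1)
    (hρ : θ * (ρ - 1) = K) (hΔ : 0 ≤ Δ) (ha0 : a 0 ≤ 0) (hc0 : c 0 ≤ Δ)
    (hc : ∀ t, c (t + 1) ≤ (1 - θ) * (1 + K) * c t + K * (Δ + a t))
    (ha : ∀ t, a (t + 1) ≤ a t + c (t + 1)) (t : ℕ) :
    c t ≤ ρ ^ t * Δ ∧ K * a t ≤ θ * ρ * (ρ ^ t - 1) * Δ := by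
  have hρ1 : 0 ≤ ρ - 1 := (mul_nonneg_iff_of_pos_left hθ0).mp (hρ ▸ hK)
  induction t with
  | zero => simpa using ⟨hc0, mul_nonpos_of_nonneg_of_nonpos hK ha0⟩
  | succ t ih =>
    obtain ⟨hct, hat⟩ := ih
    have hct' : c (t + 1) ≤ ρ ^ (t + 1) * Δ := by
      have hslack : 0 ≤ ((1 - θ) ^ 2 * ρ ^ t * (ρ - 1) + θ) * Δ := by
        have : 0 ≤ ρ ^ t := pow_nonneg (by linarith) t
        positivity
      calc c (t + 1) ≤ (1 - θ) * (1 + K) * c t + K * Δ + K * a t := by linarith [hc t]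
        _ ≤ (1 - θ) * (1 + K) * (ρ ^ t * Δ) + K * Δ + θ * ρ * (ρ ^ t - 1) * Δ := by
            gcongr
        _ = ρ ^ (t + 1) * Δ - ((1 - θ) ^ 2 * ρ ^ t * (ρ - 1) + θ) * Δ := by rw [← hρ]; ring
        _ ≤ ρ ^ (t + 1) * Δ := sub_le_self _ hslack
    refine ⟨hct', ?_⟩
    calc K * a (t + 1) ≤ K * a t + K * c (t + 1) := by
          rw [← mul_add]; exact mul_le_mul_of_nonneg_left (ha t) hK
      _ ≤ θ * ρ * (ρ ^ t - 1) * Δ + K * (ρ ^ (t + 1) * Δ) :=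
          add_le_add hat (mul_le_mul_of_nonneg_left hct' hK)
      _ = θ * ρ * (ρ ^ (t + 1) - 1) * Δ := by rw [← hρ]; ring

theorem le_nat_mul_pow_of_le_add (hρ : 1 ≤ ρ) (hΔ : 0 ≤ Δ) (ha0 : a 0 ≤ 0)
    (ha : ∀ t, a (t + 1) ≤ a t + c (t + 1)) (hc : ∀ t, c t ≤ ρ ^ t * Δ) (t : ℕ) :
    a t ≤ t * ρ ^ t * Δ := by
  induction t with
  | zero => simpa using ha0
  | succ t ih =>
    have hmono : (t : ℝ) * ρ ^ t * Δ ≤ t * ρ ^ (t + 1) * Δ := by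
      gcongr
      exact t.le_succ
    push_cast
    linarith [ha t, hc (t + 1)]

end Recursion

namespace Nesterov

variable {E F : Type*} [SeminormedAddCommGroup E] [NormedSpace ℝ E] [SeminormedAddCommGroup F]
  {θ η L : ℝ}

/-- The look-ahead point `ỹ_t` of Nesterov's method, from `y = y_t` and `y' = y_{t-1}`. -/
def extrapolate (θ : ℝ) (y y' : E) : E := y + (1 - θ) • (y - y')

theorem norm_extrapolate_sub_extrapolate_le (hθ : θ ≤ 1) (y₁ y₁' y₂ y₂' : E) :
    ‖extrapolate θ y₁ y₁' - extrapolate θ y₂ y₂'‖ ≤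
      ‖y₁ - y₂‖ + (1 - θ) * ‖(y₁ - y₁') - (y₂ - y₂')‖ :=
  calc ‖extrapolate θ y₁ y₁' - extrapolate θ y₂ y₂'‖
      = ‖(y₁ - y₂) + (1 - θ) • ((y₁ - y₁') - (y₂ - y₂'))‖ := by
        unfold extrapolate; congr 1; module
    _ ≤ ‖y₁ - y₂‖ + (1 - θ) * ‖(y₁ - y₁') - (y₂ - y₂')‖ :=
        norm_add_le_of_le le_rfl (norm_smul_of_nonneg (sub_nonneg.mpr hθ) _).le

theorem norm_step_increment_sub_le (hL : 0 ≤ L) (hη : 0 ≤ η) (hθ : θ ≤ 1) {G : F → E → E}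
    (hG : ∀ x z x' z', ‖G x z - G x' z'‖ ≤ L * (‖x - x'‖ + ‖z - z'‖))
    (x₁ x₂ : F) (y₁ y₁' y₂ y₂' : E) :
    ‖(extrapolate θ y₁ y₁' + η • G x₁ (extrapolate θ y₁ y₁') - y₁) -
        (extrapolate θ y₂ y₂' + η • G x₂ (extrapolate θ y₂ y₂') - y₂)‖ ≤
      (1 - θ) * (1 + η * L) * ‖(y₁ - y₁') - (y₂ - y₂')‖ + η * L * (‖x₁ - x₂‖ + ‖y₁ - y₂‖) := by
  set D := (y₁ - y₁') - (y₂ - y₂')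
  calc _ = ‖(1 - θ) • D + η • (G x₁ (extrapolate θ y₁ y₁') - G x₂ (extrapolate θ y₂ y₂'))‖ := by
        unfold extrapolate; congr 1; module
    _ ≤ (1 - θ) * ‖D‖ + η * ‖G x₁ (extrapolate θ y₁ y₁') - G x₂ (extrapolate θ y₂ y₂')‖ :=
        norm_add_le_of_le (norm_smul_of_nonneg (sub_nonneg.mpr hθ) _).le
          (norm_smul_of_nonneg hη _).le
    _ ≤ (1 - θ) * ‖D‖ + η * (L * (‖x₁ - x₂‖ + (‖y₁ - y₂‖ + (1 - θ) * ‖D‖))) := by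
        gcongr
        exact (hG _ _ _ _).trans (by gcongr; exact norm_extrapolate_sub_extrapolate_le hθ _ _ _ _)
    _ = _ := by ring

theorem norm_sub_le {G : ℕ → F → E → E} {y : F → ℕ → E} (hL : 0 ≤ L) (hη : 0 ≤ η)
    (hθ0 : 0 < θ) (hθ1 : θ ≤ 1)
    (hG : ∀ t x z x' z', ‖G t x z - G t x' z'‖ ≤ L * (‖x - x'‖ + ‖z - z'‖))
    (hrec : ∀ x t, y x (t + 1) =
      extrapolate θ (y x t) (y x (t - 1)) + η • G t x (extrapolate θ (y x t) (y x (t - 1))))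
    {x₁ x₂ : F} (h0 : y x₁ 0 = y x₂ 0) (T : ℕ) :
    ‖y x₁ T - y x₂ T‖ ≤ T * (1 + η * L / θ) ^ T * ‖x₁ - x₂‖ := by
  set a : ℕ → ℝ := fun t ↦ ‖y x₁ t - y x₂ t‖
  set c : ℕ → ℝ := fun t ↦ ‖(y x₁ t - y x₁ (t - 1)) - (y x₂ t - y x₂ (t - 1))‖
  have ha0 : a 0 ≤ 0 := by simp [a, h0]
  have hρ : θ * (1 + η * L / θ - 1) = η * L := by field_simp; ring
  have hc : ∀ t, c (t + 1) ≤ (1 - θ) * (1 + η * L) * c t + η * L * (‖x₁ - x₂‖ + a t) := by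
    intro t
    simpa only [c, a, Nat.add_sub_cancel, hrec x₁ t, hrec x₂ t] using
      norm_step_increment_sub_le hL hη hθ1 (hG t) x₁ x₂ _ _ _ _
  have ha : ∀ t, a (t + 1) ≤ a t + c (t + 1) := by
    intro t
    calc a (t + 1)
        = ‖(y x₁ t - y x₂ t) + ((y x₁ (t + 1) - y x₁ t) - (y x₂ (t + 1) - y x₂ t))‖ := by
          simp only [a]; congr 1; abel
      _ ≤ a t + c (t + 1) := norm_add_le _ _
  have hc' t := (le_pow_mul_of_momentum_recursion (mul_nonneg hη hL) hθ0 hθ1 hρ (norm_nonneg _)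
    ha0 (by simp [c]) hc ha t).1
  exact le_nat_mul_pow_of_le_add (le_add_of_nonneg_right (by positivity)) (norm_nonneg _) ha0 ha
    hc' T

end Nesterov

-- The convention `y_{-1} = y_0` is encoded by truncated subtraction: `0 - 1 = 0` in `ℕ`.
theorem snag_lipschitz_general {d1 d2 n : ℕ} (L η θ : ℝ) (hL : 0 ≤ L) (hη : 0 ≤ η)
    (hθ0 : 0 < θ) (hθ1 : θ ≤ 1) (T : ℕ)
    (f : Fin n → EuclideanSpace ℝ (Fin d1) → EuclideanSpace ℝ (Fin d2) → ℝ)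
    (σ : ℕ → Fin n) (y0 : EuclideanSpace ℝ (Fin d2))
    (y : EuclideanSpace ℝ (Fin d1) → ℕ → EuclideanSpace ℝ (Fin d2))
    (hgrad : ∀ j x1 y1 x2 y2,
      ‖gradient (f j x1) y1 - gradient (f j x2) y2‖ ≤ L * (‖x1 - x2‖ + ‖y1 - y2‖))
    (hy0 : ∀ x, y x 0 = y0)
    (hrec : ∀ x t, y x (t + 1) =
      (y x t + (1 - θ) • (y x t - y x (t - 1))) +
        η • gradient (f (σ t) x) (y x t + (1 - θ) • (y x t - y x (t - 1)))) :
    ∀ x1 x2, ‖y x1 T - y x2 T‖ ≤ T * (1 + η * L / θ) ^ T * ‖x1 - x2‖ :=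
  fun _ _ ↦ Nesterov.norm_sub_le (G := fun t x ↦ gradient (f (σ t) x)) hL hη hθ0 hθ1
    (fun t ↦ hgrad (σ t)) hrec (by rw [hy0, hy0]) T

/-- `T`-step stochastic Nesterov accelerated gradient ascent with
momentum parameter `θ ∈ (0,1]` on `L`-gradient Lipschitz functions is
`T (1 + ηL/θ)^T`-Lipschitz as a map `x ↦ y_T(x)`.
(The convention `y_{-1} = y_0` is encoded by truncated subtraction `t - 1` on ℕ.) -/
theorem snag_lipschitz {d1 d2 n : ℕ} (L η θ : ℝ) (hL : 0 ≤ L) (hη : 0 ≤ η)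
    (hθ0 : 0 < θ) (hθ1 : θ ≤ 1) (T : ℕ)
    (f : Fin n → EuclideanSpace ℝ (Fin d1) → EuclideanSpace ℝ (Fin d2) → ℝ)
    (σ : ℕ → Fin n) (y0 : EuclideanSpace ℝ (Fin d2))
    (y : EuclideanSpace ℝ (Fin d1) → ℕ → EuclideanSpace ℝ (Fin d2))
    (hdiff : ∀ j x, Differentiable ℝ (f j x))
    (hgrad : ∀ j x1 y1 x2 y2,
      ‖gradient (f j x1) y1 - gradient (f j x2) y2‖ ≤ L * (‖x1 - x2‖ + ‖y1 - y2‖))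
    (hy0 : ∀ x, y x 0 = y0)
    (hrec : ∀ x t, y x (t + 1) =
      (y x t + (1 - θ) • (y x t - y x (t - 1))) +
        η • gradient (f (σ t) x) (y x t + (1 - θ) • (y x t - y x (t - 1)))) :
    ∀ x1 x2, ‖y x1 T - y x2 T‖ ≤ T * (1 + η * L / θ) ^ T * ‖x1 - x2‖ :=
  snag_lipschitz_general L η θ hL hη hθ0 hθ1 T f σ y0 y hgrad hy0 hrec
end
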